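/- arXiv:2303.13291 — 2 statements merged into one kernel-verified Lean document; each statement's English description precedes it below -/
import Mathlib

section
/- Assume f, g : ℝ → ℝ are C² and H : M → ℝ is C¹ and satisfies f(H(q,p)) = |p|²/2 − g(H(q,p))/|q| for all (q,p) ∈ M. Fix E ∈ ℝ with f'(E) ≠ 0 and define J_E(q,p) = |p|²/2 − g(E)/|q|. Then at every point (q,p) ∈ M with H(q,p) = E one has (1 + g'(E)/(f'(E)|q|)) · X_{f∘H}(q,p) = X_{J_E}(q,p); equivalently (f'(E) + g'(E)/|q|) · X_H(q,p) = X_{J_E}(q,p). In particular the Hamiltonian vector fields of H and of the Kepler Hamiltonian J_E with gravitational coupling g(E) are proportional on the levelset H⁻¹(E). -/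
noncomputable section

/-- Squared Euclidean norm on `ℝ³`. -/
def normSq (v : Fin 3 → ℝ) : ℝ := ∑ i, v i ^ 2

/-- Euclidean norm on `ℝ³`. -/
def nrm (v : Fin 3 → ℝ) : ℝ := Real.sqrt (normSq v)

/-- Euclidean inner product `p·q`. -/
def dotP (p q : Fin 3 → ℝ) : ℝ := ∑ i, p i * q i

/-- Partial derivative `∂F/∂q^k` of a Hamiltonian function at `(q,p)`. -/
def pdQ (F : (Fin 3 → ℝ) → (Fin 3 → ℝ) → ℝ) (q p : Fin 3 → ℝ) (k : Fin 3) : ℝ :=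
  deriv (fun t => F (Function.update q k t) p) (q k)

/-- Partial derivative `∂F/∂p^k` of a Hamiltonian function at `(q,p)`. -/
def pdP (F : (Fin 3 → ℝ) → (Fin 3 → ℝ) → ℝ) (q p : Fin 3 → ℝ) (k : Fin 3) : ℝ :=
  deriv (fun t => F q (Function.update p k t)) (p k)

/-- The Hamiltonian vector field `X_F(q,p) = (∂F/∂p, −∂F/∂q)`. -/
def Xham (F : (Fin 3 → ℝ) → (Fin 3 → ℝ) → ℝ) (q p : Fin 3 → ℝ) :
    (Fin 3 → ℝ) × (Fin 3 → ℝ) :=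
  (fun k => pdP F q p k, fun k => -pdQ F q p k)

lemma normSq_nonneg' (v : Fin 3 → ℝ) : 0 ≤ normSq v :=
  Finset.sum_nonneg fun _ _ => sq_nonneg _

lemma normSq_pos' {v : Fin 3 → ℝ} (hv : v ≠ 0) : 0 < normSq v := by
  rcases Function.ne_iff.mp hv with ⟨i, hi⟩
  have hi' : v i ≠ 0 := by simpa using hi
  have h1 : 0 < v i ^ 2 := pow_two_pos_of_ne_zero hi'
  exact lt_of_lt_of_le h1
    (Finset.single_le_sum (fun j _ => sq_nonneg (v j)) (Finset.mem_univ i))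

lemma nrm_pos' {v : Fin 3 → ℝ} (hv : v ≠ 0) : 0 < nrm v :=
  Real.sqrt_pos.mpr (normSq_pos' hv)

lemma normSq_update' (v : Fin 3 → ℝ) (k : Fin 3) (t : ℝ) :
    normSq (Function.update v k t) = t ^ 2 + (normSq v - v k ^ 2) := by
  unfold normSq
  have h : ∀ i, Function.update v k t i ^ 2 = Function.update (fun i => v i ^ 2) k (t ^ 2) i := by
    intro i; by_cases h : i = k <;> simp [Function.update_apply, h]
  simp_rw [h]
  rw [Finset.sum_update_of_mem (Finset.mem_univ k),
    Finset.sum_sdiff_eq_sub (Finset.subset_univ {k})]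
  simp [normSq]

lemma hasDerivAt_update' (v : Fin 3 → ℝ) (k : Fin 3) (t : ℝ) :
    HasDerivAt (fun s => Function.update v k s) (Pi.single k 1) t := by
  rw [hasDerivAt_pi]
  intro i
  by_cases h : i = k
  · subst h
    simpa [Function.update_apply] using hasDerivAt_id' t
  · simpa [Function.update_apply, h, Pi.single_eq_of_ne h] using hasDerivAt_const t (v i)

lemma hasDerivAt_nrm_update' {v : Fin 3 → ℝ} (hv : v ≠ 0) (k : Fin 3) :
    HasDerivAt (fun t => nrm (Function.update v k t)) (v k / nrm v) (v k) := by
  have hns : normSq v ≠ 0 := ne_of_gt (normSq_pos' hv)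
  have h1 : HasDerivAt (fun t : ℝ => t ^ 2 + (normSq v - v k ^ 2)) (2 * v k) (v k) := by
    simpa using (hasDerivAt_pow 2 (v k)).add_const (normSq v - v k ^ 2)
  have hpt : (v k) ^ 2 + (normSq v - v k ^ 2) = normSq v := by ring
  have h2 : HasDerivAt (fun x : ℝ => Real.sqrt x) (1 / (2 * Real.sqrt (normSq v)))
      ((v k) ^ 2 + (normSq v - v k ^ 2)) := by
    rw [hpt]; exact Real.hasDerivAt_sqrt hns
  have h3 := h2.comp (v k) h1
  have heq : (fun t : ℝ => nrm (Function.update v k t)) =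
      (fun x : ℝ => Real.sqrt x) ∘ (fun t : ℝ => t ^ 2 + (normSq v - v k ^ 2)) := by
    funext t; simp [nrm, Function.comp, normSq_update']
  rw [heq]
  refine h3.congr_deriv ?_
  have hsq : Real.sqrt (normSq v) ≠ 0 := by
    simpa [nrm] using ne_of_gt (nrm_pos' hv)
  unfold nrm
  field_simp

/-- if `f, g` are C², `H` is C¹ on `M = (ℝ³∖{0}) × ℝ³` and satisfies
`f(H(q,p)) = |p|²/2 − g(H(q,p))/|q|` on `M`, and `E` is such that `f'(E) ≠ 0`, then on the
levelset `H = E` the Hamiltonian vector field of `H` (and of `K = f∘H`) is proportional to that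
of the Kepler Hamiltonian `J_E(q,p) = |p|²/2 − g(E)/|q|`, with the explicit proportionality
factors `(1 + g'(E)/(f'(E)|q|))` for `X_K` and `(f'(E) + g'(E)/|q|)` for `X_H`. -/
theorem on_shell_proportionality_to_Kepler
    (f g : ℝ → ℝ) (H : (Fin 3 → ℝ) → (Fin 3 → ℝ) → ℝ)
    (hf : ContDiff ℝ 2 f) (hg : ContDiff ℝ 2 g)
    (hH : ContDiffOn ℝ 1 (fun x : (Fin 3 → ℝ) × (Fin 3 → ℝ) => H x.1 x.2) {x | x.1 ≠ 0})
    (hrel : ∀ q p : Fin 3 → ℝ, q ≠ 0 →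
      f (H q p) = normSq p / 2 - g (H q p) / nrm q)
    (E : ℝ) (hE : deriv f E ≠ 0) :
    ∀ q p : Fin 3 → ℝ, q ≠ 0 → H q p = E →
      (1 + deriv g E / (deriv f E * nrm q)) • Xham (fun q p => f (H q p)) q p
          = Xham (fun q p => normSq p / 2 - g E / nrm q) q p
      ∧ (deriv f E + deriv g E / nrm q) • Xham H q p
          = Xham (fun q p => normSq p / 2 - g E / nrm q) q p := by
  intro q p hq hHE
  have hnq : (0:ℝ) < nrm q := nrm_pos' hq
  have hnq' : nrm q ≠ 0 := ne_of_gt hnq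
  have hopen : IsOpen {x : (Fin 3 → ℝ) × (Fin 3 → ℝ) | x.1 ≠ 0} :=
    isOpen_compl_singleton.preimage continuous_fst
  have hHd : DifferentiableAt ℝ (fun x : (Fin 3 → ℝ) × (Fin 3 → ℝ) => H x.1 x.2) (q, p) :=
    (hH.contDiffAt (hopen.mem_nhds hq)).differentiableAt one_ne_zero
  have hfd : HasDerivAt f (deriv f E) E := ((hf.differentiable (by norm_num)) E).hasDerivAt
  have hgd : HasDerivAt g (deriv g E) E := ((hg.differentiable (by norm_num)) E).hasDerivAt
  -- p-direction curves
  have hbP : ∀ k : Fin 3, HasDerivAt (fun t => H q (Function.update p k t))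
      (pdP H q p k) (p k) := by
    intro k
    have hc : HasDerivAt (fun t : ℝ => ((q, Function.update p k t) :
        (Fin 3 → ℝ) × (Fin 3 → ℝ)))
        (((0 : Fin 3 → ℝ), (Pi.single k 1 : Fin 3 → ℝ))) (p k) :=
      (hasDerivAt_const _ q).prodMk (hasDerivAt_update' p k (p k))
    have hd : DifferentiableAt ℝ (fun t => H q (Function.update p k t)) (p k) := by
      have h2 := DifferentiableAt.comp (p k)
        (by rw [Function.update_eq_self]; exact hHd) hc.differentiableAt
      exact h2
    exact hd.hasDerivAt
  -- q-direction curves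
  have hbQ : ∀ k : Fin 3, HasDerivAt (fun t => H (Function.update q k t) p)
      (pdQ H q p k) (q k) := by
    intro k
    have hc : HasDerivAt (fun t : ℝ => ((Function.update q k t, p) :
        (Fin 3 → ℝ) × (Fin 3 → ℝ)))
        (((Pi.single k 1 : Fin 3 → ℝ), (0 : Fin 3 → ℝ))) (q k) :=
      (hasDerivAt_update' q k (q k)).prodMk (hasDerivAt_const _ p)
    have hd : DifferentiableAt ℝ (fun t => H (Function.update q k t) p) (q k) := by
      have h2 := DifferentiableAt.comp (q k)
        (by rw [Function.update_eq_self]; exact hHd) hc.differentiableAt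
      exact h2
    exact hd.hasDerivAt
  -- chain rule for f∘H and g∘H along the curves
  have hfdP : ∀ k : Fin 3, HasDerivAt f (deriv f E) (H q (Function.update p k (p k))) := by
    intro k; rw [Function.update_eq_self, hHE]; exact hfd
  have hgdP : ∀ k : Fin 3, HasDerivAt g (deriv g E) (H q (Function.update p k (p k))) := by
    intro k; rw [Function.update_eq_self, hHE]; exact hgd
  have hfdQ : ∀ k : Fin 3, HasDerivAt f (deriv f E) (H (Function.update q k (q k)) p) := by
    intro k; rw [Function.update_eq_self, hHE]; exact hfd
  have hgdQ : ∀ k : Fin 3, HasDerivAt g (deriv g E) (H (Function.update q k (q k)) p) := by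
    intro k; rw [Function.update_eq_self, hHE]; exact hgd
  have hLP : ∀ k : Fin 3, HasDerivAt (fun t => f (H q (Function.update p k t)))
      (deriv f E * pdP H q p k) (p k) := fun k => (hfdP k).comp (p k) (hbP k)
  have hgP : ∀ k : Fin 3, HasDerivAt (fun t => g (H q (Function.update p k t)))
      (deriv g E * pdP H q p k) (p k) := fun k => (hgdP k).comp (p k) (hbP k)
  have hLQ : ∀ k : Fin 3, HasDerivAt (fun t => f (H (Function.update q k t) p))
      (deriv f E * pdQ H q p k) (q k) := fun k => (hfdQ k).comp (q k) (hbQ k)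
  have hgQ : ∀ k : Fin 3, HasDerivAt (fun t => g (H (Function.update q k t) p))
      (deriv g E * pdQ H q p k) (q k) := fun k => (hgdQ k).comp (q k) (hbQ k)
  -- derivative of kinetic term
  have hns : ∀ k : Fin 3, HasDerivAt (fun t => normSq (Function.update p k t) / 2) (p k) (p k) := by
    intro k
    have h1 : HasDerivAt (fun t : ℝ => (t ^ 2 + (normSq p - p k ^ 2)) / 2) (p k) (p k) := by
      have := ((hasDerivAt_pow 2 (p k)).add_const (normSq p - p k ^ 2)).div_const 2
      refine this.congr_deriv ?_; ring
    have heq : (fun t : ℝ => normSq (Function.update p k t) / 2) =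
        fun t : ℝ => (t ^ 2 + (normSq p - p k ^ 2)) / 2 := by
      funext t; rw [normSq_update']
    rw [heq]; exact h1
  -- derivative of nrm along q-curve
  have hnQ : ∀ k : Fin 3, HasDerivAt (fun t => nrm (Function.update q k t))
      (q k / nrm q) (q k) := fun k => hasDerivAt_nrm_update' hq k
  have hnQne : ∀ k : Fin 3, nrm (Function.update q k (q k)) ≠ 0 := by
    intro k; rw [Function.update_eq_self]; exact hnq'
  -- eventual nonvanishing along q-curve
  have hev : ∀ k : Fin 3, ∀ᶠ t in nhds (q k), Function.update q k t ≠ 0 := by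
    intro k
    have hc : ContinuousAt (fun t => Function.update q k t) (q k) :=
      (hasDerivAt_update' q k (q k)).continuousAt
    have h0 : Function.update q k (q k) ≠ 0 := by rw [Function.update_eq_self]; exact hq
    exact hc.eventually_ne h0
  -- key p-equation
  have hkeyP : ∀ k : Fin 3, (deriv f E + deriv g E / nrm q) * pdP H q p k = p k := by
    intro k
    have hR : HasDerivAt
        (fun t => normSq (Function.update p k t) / 2 - g (H q (Function.update p k t)) / nrm q)
        (p k - deriv g E * pdP H q p k / nrm q) (p k) :=
      (hns k).sub ((hgP k).div_const (nrm q))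
    have heqfun : (fun t => f (H q (Function.update p k t))) =
        fun t => normSq (Function.update p k t) / 2 - g (H q (Function.update p k t)) / nrm q := by
      funext t; exact hrel q (Function.update p k t) hq
    have hL := hLP k
    rw [heqfun] at hL
    have huniq := hL.unique hR
    field_simp at huniq ⊢
    linear_combination huniq
  -- key q-equation
  have hkeyQ : ∀ k : Fin 3, (deriv f E + deriv g E / nrm q) * pdQ H q p k
      = g E * q k / nrm q ^ 3 := by
    intro k
    have hdiv := (hgQ k).div (hnQ k) (hnQne k)
    rw [Function.update_eq_self, hHE] at hdiv
    have hR := (hasDerivAt_const (q k) (normSq p / 2)).sub hdiv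
    have hevEq : (fun t => f (H (Function.update q k t) p)) =ᶠ[nhds (q k)]
        fun t => normSq p / 2 - g (H (Function.update q k t) p) / nrm (Function.update q k t) :=
      (hev k).mono fun t ht => hrel (Function.update q k t) p ht
    have hL := hR.congr_of_eventuallyEq hevEq
    have huniq := (hLQ k).unique hL
    field_simp at huniq ⊢
    linear_combination huniq
  -- partials of the Kepler Hamiltonian
  have hJ1 : ∀ k : Fin 3, pdP (fun q p => normSq p / 2 - g E / nrm q) q p k = p k := by
    intro k
    have hR : HasDerivAt (fun t => normSq (Function.update p k t) / 2 - g E / nrm q)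
        (p k) (p k) := by
      simpa using (hns k).sub_const (g E / nrm q)
    exact hR.deriv
  have hJ2 : ∀ k : Fin 3, pdQ (fun q p => normSq p / 2 - g E / nrm q) q p k
      = g E * q k / nrm q ^ 3 := by
    intro k
    have hdiv := (hasDerivAt_const (q k) (g E)).div (hnQ k) (hnQne k)
    rw [Function.update_eq_self] at hdiv
    have hR := (hasDerivAt_const (q k) (normSq p / 2)).sub hdiv
    have : deriv (fun t => normSq p / 2 - g E / nrm (Function.update q k t)) (q k) = _ := hR.deriv
    rw [show pdQ (fun q p => normSq p / 2 - g E / nrm q) q p k =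
      deriv (fun t => normSq p / 2 - g E / nrm (Function.update q k t)) (q k) from rfl, this]
    rw [zero_mul, zero_sub, zero_sub, neg_div, neg_neg]
    rw [mul_div_assoc', div_div]
    congr 1
    ring
  -- partials of K = f ∘ H
  have hK1 : ∀ k : Fin 3, pdP (fun q p => f (H q p)) q p k = deriv f E * pdP H q p k :=
    fun k => (hLP k).deriv
  have hK2 : ∀ k : Fin 3, pdQ (fun q p => f (H q p)) q p k = deriv f E * pdQ H q p k :=
    fun k => (hLQ k).deriv
  have hfactor : ∀ x : ℝ, (1 + deriv g E / (deriv f E * nrm q)) * (deriv f E * x)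
      = (deriv f E + deriv g E / nrm q) * x := by
    intro x; field_simp
  constructor
  · refine Prod.ext ?_ ?_ <;> funext k <;>
      simp only [Xham, Prod.smul_fst, Prod.smul_snd, Pi.smul_apply, smul_eq_mul]
    · rw [hK1 k, hfactor, hkeyP k, hJ1 k]
    · rw [hJ2 k, hK2 k, mul_neg, hfactor, hkeyQ k]
  · refine Prod.ext ?_ ?_ <;> funext k <;>
      simp only [Xham, Prod.smul_fst, Prod.smul_snd, Pi.smul_apply, smul_eq_mul]
    · rw [hkeyP k, hJ1 k]
    · rw [hJ2 k, mul_neg, hkeyQ k]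

end
end

section
/- Let s : M → ℝ be the function s(q,p) = p·q. Then for every j ∈ (1/2)ℤ and every F ∈ W_j, the Poisson bracket {s, F} again lies in W_j. -/
noncomputable section

/-- The canonical Poisson bracket `{F,G} = Σ_k (∂F/∂q^k ∂G/∂p^k − ∂F/∂p^k ∂G/∂q^k)`. -/
def pbr (F G : (Fin 3 → ℝ) → (Fin 3 → ℝ) → ℝ) (q p : Fin 3 → ℝ) : ℝ :=
  ∑ k, (pdQ F q p k * pdP G q p k - pdP F q p k * pdQ G q p k)

/-- The phase space `M = (ℝ³ ∖ {0}) × ℝ³`. -/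
abbrev Mspace := {q : Fin 3 → ℝ // q ≠ 0} × (Fin 3 → ℝ)

/-- Extension (by junk value `0` at `q = 0`) of a function on `M` to all of `ℝ³ × ℝ³`;
used only to define derivatives, which are local and hence independent of the extension. -/
def extM (F : Mspace → ℝ) : (Fin 3 → ℝ) → (Fin 3 → ℝ) → ℝ :=
  fun q p => if h : q ≠ 0 then F (⟨q, h⟩, p) else 0

/-- The canonical Poisson bracket of two functions on `M`. -/
def pbrM (F G : Mspace → ℝ) : Mspace → ℝ :=
  fun x => pbr (extM F) (extM G) x.1.1 x.2

/-- The monomial function `(q,p) ↦ (|p|²)^l (p·q)^n / |q|^m` on `M`. -/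
def Wmon (l m n : ℕ) : Mspace → ℝ :=
  fun x => (normSq x.2) ^ l * (dotP x.2 x.1.1) ^ n / (nrm x.1.1) ^ m

/-- `W_j`: the real span, inside the vector space of functions `M → ℝ`, of the monomials
`(|p|²)^l (p·q)^n / |q|^m` over all `(l,m,n) ∈ ℕ³` with `l + m − n/2 = j + 1`. -/
def Wspace (j : ℚ) : Submodule ℝ (Mspace → ℝ) :=
  Submodule.span ℝ
    {F | ∃ l m n : ℕ, (l : ℚ) + (m : ℚ) - (n : ℚ) / 2 = j + 1 ∧ F = Wmon l m n}

/-! ### Auxiliary material -/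

namespace BracketAux

open Filter

lemma normSq_nonneg (v : Fin 3 → ℝ) : 0 ≤ normSq v :=
  Finset.sum_nonneg fun _ _ => sq_nonneg _

lemma normSq_pos {q : Fin 3 → ℝ} (hq : q ≠ 0) : 0 < normSq q := by
  rcases lt_or_eq_of_le (normSq_nonneg q) with h | h
  · exact h
  · exfalso; apply hq; funext i
    have := (Finset.sum_eq_zero_iff_of_nonneg (fun i _ => sq_nonneg (q i))).mp h.symm i
      (Finset.mem_univ i)
    exact (pow_eq_zero_iff (two_ne_zero)).mp this

lemma nrm_pos {q : Fin 3 → ℝ} (hq : q ≠ 0) : 0 < nrm q :=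
  Real.sqrt_pos.mpr (normSq_pos hq)

lemma nrm_sq {q : Fin 3 → ℝ} : nrm q ^ 2 = normSq q :=
  Real.sq_sqrt (normSq_nonneg q)

lemma eventually_update_ne {q : Fin 3 → ℝ} (hq : q ≠ 0) (k : Fin 3) :
    ∀ᶠ t in nhds (q k), Function.update q k t ≠ 0 := by
  have hcont : ContinuousAt (fun t : ℝ => Function.update q k t) (q k) :=
    (continuous_const.update k continuous_id).continuousAt
  exact hcont.eventually_ne (by rw [Function.update_eq_self]; exact hq)

lemma hasDerivAt_sum_update (f q : Fin 3 → ℝ) (k : Fin 3) :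
    HasDerivAt (fun t => ∑ i, f i * Function.update q k t i) (f k) (q k) := by
  have h : ∀ i : Fin 3, HasDerivAt (fun t => f i * Function.update q k t i)
      (if i = k then f i else 0) (q k) := by
    intro i
    by_cases h : i = k
    · subst h
      simp only [Function.update_self, if_pos rfl]
      simpa using (hasDerivAt_id (q i)).const_mul (f i)
    · simp only [Function.update_of_ne h, if_neg h]
      exact hasDerivAt_const (q k) (f i * q i)
  have := HasDerivAt.fun_sum (fun i (_ : i ∈ Finset.univ) => h i)
  simpa [Finset.sum_ite_eq'] using this

lemma hasDerivAt_normSq_update (q : Fin 3 → ℝ) (k : Fin 3) :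
    HasDerivAt (fun t => normSq (Function.update q k t)) (2 * q k) (q k) := by
  have h : ∀ i : Fin 3, HasDerivAt (fun t => Function.update q k t i ^ 2)
      (if i = k then 2 * q k else 0) (q k) := by
    intro i
    by_cases h : i = k
    · subst h
      simp only [Function.update_self, if_pos rfl]
      simpa using (hasDerivAt_id (q i)).fun_pow 2
    · simp only [Function.update_of_ne h, if_neg h]
      exact hasDerivAt_const (q k) (q i ^ 2)
  have := HasDerivAt.fun_sum (fun i (_ : i ∈ Finset.univ) => h i)
  simpa [normSq, Finset.sum_ite_eq'] using this

lemma hasDerivAt_nrm_update {q : Fin 3 → ℝ} (hq : q ≠ 0) (k : Fin 3) :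
    HasDerivAt (fun t => nrm (Function.update q k t)) (q k / nrm q) (q k) := by
  have h1 : HasDerivAt Real.sqrt (1 / (2 * Real.sqrt (normSq q))) (normSq q) :=
    Real.hasDerivAt_sqrt (ne_of_gt (normSq_pos hq))
  have h2 := hasDerivAt_normSq_update q k
  have h3 : normSq (Function.update q k (q k)) = normSq q := by
    rw [Function.update_eq_self]
  rw [← h3] at h1
  have := h1.comp (q k) h2
  have hne : nrm q ≠ 0 := ne_of_gt (nrm_pos hq)
  replace this : HasDerivAt (fun t => nrm (Function.update q k t)) _ (q k) := this
  convert this using 1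
  rw [h3]
  show q k / nrm q = 1 / (2 * Real.sqrt (normSq q)) * (2 * q k)
  rw [show Real.sqrt (normSq q) = nrm q from rfl]
  field_simp

/-- The monomial as a function of `(q, p) ∈ ℝ³ × ℝ³`. -/
def Gm (l m n : ℕ) (q p : Fin 3 → ℝ) : ℝ := normSq p ^ l * dotP p q ^ n / nrm q ^ m

lemma hasDerivAt_dotP_right (p q : Fin 3 → ℝ) (k : Fin 3) :
    HasDerivAt (fun t => dotP p (Function.update q k t)) (p k) (q k) :=
  hasDerivAt_sum_update p q k

lemma hasDerivAt_dotP_left (p q : Fin 3 → ℝ) (k : Fin 3) :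
    HasDerivAt (fun t => dotP (Function.update p k t) q) (q k) (p k) := by
  have h : (fun t => dotP (Function.update p k t) q)
      = fun t => ∑ i, q i * Function.update p k t i := by
    funext t; simp [dotP, mul_comm]
  rw [h]; exact hasDerivAt_sum_update q p k

lemma hasDerivAt_Gm_q (l m n : ℕ) {q : Fin 3 → ℝ} (hq : q ≠ 0) (p : Fin 3 → ℝ) (k : Fin 3) :
    HasDerivAt (fun t => Gm l m n (Function.update q k t) p)
      ((normSq p ^ l * ((n:ℝ) * dotP p q ^ (n-1) * p k) * nrm q ^ m
        - normSq p ^ l * dotP p q ^ n * ((m:ℝ) * nrm q ^ (m-1) * (q k / nrm q)))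
        / (nrm q ^ m) ^ 2)
      (q k) := by
  have hnum : HasDerivAt (fun t => normSq p ^ l * dotP p (Function.update q k t) ^ n)
      (normSq p ^ l * ((n:ℝ) * dotP p q ^ (n-1) * p k)) (q k) := by
    have := ((hasDerivAt_dotP_right p q k).pow n).const_mul (normSq p ^ l)
    simpa [Function.update_eq_self] using this
  have hden : HasDerivAt (fun t => nrm (Function.update q k t) ^ m)
      ((m:ℝ) * nrm q ^ (m-1) * (q k / nrm q)) (q k) := by
    have := (hasDerivAt_nrm_update hq k).fun_pow m
    simpa using this
  have hne : (fun t => nrm (Function.update q k t) ^ m) (q k) ≠ 0 := by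
    simp only [Function.update_eq_self]
    exact pow_ne_zero _ (ne_of_gt (nrm_pos hq))
  have := hnum.fun_div hden hne
  simpa [Gm, Function.update_eq_self] using this

lemma hasDerivAt_Gm_p (l m n : ℕ) (q p : Fin 3 → ℝ) (k : Fin 3) :
    HasDerivAt (fun t => Gm l m n q (Function.update p k t))
      (((l:ℝ) * normSq p ^ (l-1) * (2 * p k) * dotP p q ^ n
        + normSq p ^ l * ((n:ℝ) * dotP p q ^ (n-1) * q k)) / nrm q ^ m)
      (p k) := by
  have h1 : HasDerivAt (fun t => normSq (Function.update p k t) ^ l)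
      ((l:ℝ) * normSq p ^ (l-1) * (2 * p k)) (p k) := by
    have := (hasDerivAt_normSq_update p k).fun_pow l
    simpa [mul_assoc] using this
  have h2 : HasDerivAt (fun t => dotP (Function.update p k t) q ^ n)
      ((n:ℝ) * dotP p q ^ (n-1) * q k) (p k) := by
    have := (hasDerivAt_dotP_left p q k).fun_pow n
    simpa using this
  have := (h1.mul h2).div_const (nrm q ^ m)
  simpa [Gm, Function.update_eq_self] using this

/-- the function `s(q,p) = p·q` -/
def sF : Mspace → ℝ := fun x => dotP x.2 x.1.1

lemma extM_Wmon_eq {q : Fin 3 → ℝ} (hq : q ≠ 0) (p : Fin 3 → ℝ) (l m n : ℕ) :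
    extM (Wmon l m n) q p = Gm l m n q p := by
  simp [extM, Wmon, Gm, hq]

lemma pdQ_s {q : Fin 3 → ℝ} (hq : q ≠ 0) (p : Fin 3 → ℝ) (k : Fin 3) :
    pdQ (extM sF) q p k = p k := by
  have hev : (fun t => extM sF (Function.update q k t) p)
      =ᶠ[nhds (q k)] fun t => dotP p (Function.update q k t) := by
    filter_upwards [eventually_update_ne hq k] with t ht
    simp [extM, sF, ht]
  unfold pdQ
  rw [hev.deriv_eq, (hasDerivAt_dotP_right p q k).deriv]

lemma pdP_s {q : Fin 3 → ℝ} (hq : q ≠ 0) (p : Fin 3 → ℝ) (k : Fin 3) :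
    pdP (extM sF) q p k = q k := by
  have hfe : (fun t => extM sF q (Function.update p k t))
      = fun t => dotP (Function.update p k t) q := by
    funext t; simp [extM, sF, hq]
  unfold pdP
  rw [hfe, (hasDerivAt_dotP_left p q k).deriv]

lemma W_ev (l m n : ℕ) {q : Fin 3 → ℝ} (hq : q ≠ 0) (p : Fin 3 → ℝ) (k : Fin 3) :
    (fun t => extM (Wmon l m n) (Function.update q k t) p)
      =ᶠ[nhds (q k)] fun t => Gm l m n (Function.update q k t) p := by
  filter_upwards [eventually_update_ne hq k] with t ht
  exact extM_Wmon_eq ht p l m n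

lemma W_fe (l m n : ℕ) {q : Fin 3 → ℝ} (hq : q ≠ 0) (p : Fin 3 → ℝ) (k : Fin 3) :
    (fun t => extM (Wmon l m n) q (Function.update p k t))
      = fun t => Gm l m n q (Function.update p k t) := by
  funext t; exact extM_Wmon_eq hq _ l m n

lemma pdQ_W (l m n : ℕ) {q : Fin 3 → ℝ} (hq : q ≠ 0) (p : Fin 3 → ℝ) (k : Fin 3) :
    pdQ (extM (Wmon l m n)) q p k
      = (normSq p ^ l * ((n:ℝ) * dotP p q ^ (n-1) * p k) * nrm q ^ m
        - normSq p ^ l * dotP p q ^ n * ((m:ℝ) * nrm q ^ (m-1) * (q k / nrm q)))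
        / (nrm q ^ m) ^ 2 := by
  unfold pdQ
  rw [(W_ev l m n hq p k).deriv_eq, (hasDerivAt_Gm_q l m n hq p k).deriv]

lemma pdP_W (l m n : ℕ) {q : Fin 3 → ℝ} (hq : q ≠ 0) (p : Fin 3 → ℝ) (k : Fin 3) :
    pdP (extM (Wmon l m n)) q p k
      = ((l:ℝ) * normSq p ^ (l-1) * (2 * p k) * dotP p q ^ n
        + normSq p ^ l * ((n:ℝ) * dotP p q ^ (n-1) * q k)) / nrm q ^ m := by
  unfold pdP
  rw [W_fe l m n hq p k, (hasDerivAt_Gm_p l m n q p k).deriv]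

/-- Differentiability of the extension along all coordinate lines, at points of `M`. -/
def DiffM (F : Mspace → ℝ) : Prop :=
  ∀ (q p : Fin 3 → ℝ), q ≠ 0 → ∀ k : Fin 3,
    DifferentiableAt ℝ (fun t => extM F (Function.update q k t) p) (q k) ∧
    DifferentiableAt ℝ (fun t => extM F q (Function.update p k t)) (p k)

lemma diffM_Wmon (l m n : ℕ) : DiffM (Wmon l m n) := by
  intro q p hq k
  constructor
  · exact ((W_ev l m n hq p k).differentiableAt_iff).mpr
      (hasDerivAt_Gm_q l m n hq p k).differentiableAt
  · rw [W_fe l m n hq p k]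
    exact (hasDerivAt_Gm_p l m n q p k).differentiableAt

lemma extM_add (F G : Mspace → ℝ) (q p : Fin 3 → ℝ) :
    extM (F + G) q p = extM F q p + extM G q p := by
  by_cases h : q ≠ 0 <;> simp [extM, h]

lemma extM_smul (a : ℝ) (F : Mspace → ℝ) (q p : Fin 3 → ℝ) :
    extM (a • F) q p = a * extM F q p := by
  by_cases h : q ≠ 0 <;> simp [extM, h]

lemma extM_zero (q p : Fin 3 → ℝ) : extM (0 : Mspace → ℝ) q p = 0 := by
  by_cases h : q ≠ 0 <;> simp [extM, h]

lemma diffM_add {F G : Mspace → ℝ} (hF : DiffM F) (hG : DiffM G) : DiffM (F + G) := by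
  intro q p hq k
  constructor
  · have h : (fun t => extM (F + G) (Function.update q k t) p)
        = fun t => extM F (Function.update q k t) p + extM G (Function.update q k t) p := by
      funext t; exact extM_add F G _ p
    rw [h]; exact ((hF q p hq k).1).add ((hG q p hq k).1)
  · have h : (fun t => extM (F + G) q (Function.update p k t))
        = fun t => extM F q (Function.update p k t) + extM G q (Function.update p k t) := by
      funext t; exact extM_add F G q _
    rw [h]; exact ((hF q p hq k).2).add ((hG q p hq k).2)

lemma diffM_smul (a : ℝ) {F : Mspace → ℝ} (hF : DiffM F) : DiffM (a • F) := by
  intro q p hq k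
  constructor
  · have h : (fun t => extM (a • F) (Function.update q k t) p)
        = fun t => a * extM F (Function.update q k t) p := by
      funext t; exact extM_smul a F _ p
    rw [h]; exact ((hF q p hq k).1).const_mul a
  · have h : (fun t => extM (a • F) q (Function.update p k t))
        = fun t => a * extM F q (Function.update p k t) := by
      funext t; exact extM_smul a F q _
    rw [h]; exact ((hF q p hq k).2).const_mul a

lemma diffM_zero : DiffM (0 : Mspace → ℝ) := by
  intro q p hq k
  constructor
  · have h : (fun t => extM (0 : Mspace → ℝ) (Function.update q k t) p) = fun _ => (0:ℝ) := by
      funext t; exact extM_zero _ p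
    rw [h]; exact differentiableAt_const 0
  · have h : (fun t => extM (0 : Mspace → ℝ) q (Function.update p k t)) = fun _ => (0:ℝ) := by
      funext t; exact extM_zero q _
    rw [h]; exact differentiableAt_const 0

lemma pdQ_add {F G : Mspace → ℝ} (hF : DiffM F) (hG : DiffM G)
    {q : Fin 3 → ℝ} (hq : q ≠ 0) (p : Fin 3 → ℝ) (k : Fin 3) :
    pdQ (extM (F + G)) q p k = pdQ (extM F) q p k + pdQ (extM G) q p k := by
  unfold pdQ
  have h : (fun t => extM (F + G) (Function.update q k t) p)
      = fun t => extM F (Function.update q k t) p + extM G (Function.update q k t) p := by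
    funext t; exact extM_add F G _ p
  rw [h, deriv_fun_add (hF q p hq k).1 (hG q p hq k).1]

lemma pdP_add {F G : Mspace → ℝ} (hF : DiffM F) (hG : DiffM G)
    {q : Fin 3 → ℝ} (hq : q ≠ 0) (p : Fin 3 → ℝ) (k : Fin 3) :
    pdP (extM (F + G)) q p k = pdP (extM F) q p k + pdP (extM G) q p k := by
  unfold pdP
  have h : (fun t => extM (F + G) q (Function.update p k t))
      = fun t => extM F q (Function.update p k t) + extM G q (Function.update p k t) := by
    funext t; exact extM_add F G q _
  rw [h, deriv_fun_add (hF q p hq k).2 (hG q p hq k).2]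

lemma pdQ_smul (a : ℝ) (F : Mspace → ℝ) (q p : Fin 3 → ℝ) (k : Fin 3) :
    pdQ (extM (a • F)) q p k = a * pdQ (extM F) q p k := by
  unfold pdQ
  have h : (fun t => extM (a • F) (Function.update q k t) p)
      = fun t => a * extM F (Function.update q k t) p := by
    funext t; exact extM_smul a F _ p
  rw [h, deriv_const_mul_field]

lemma pdP_smul (a : ℝ) (F : Mspace → ℝ) (q p : Fin 3 → ℝ) (k : Fin 3) :
    pdP (extM (a • F)) q p k = a * pdP (extM F) q p k := by
  unfold pdP
  have h : (fun t => extM (a • F) q (Function.update p k t))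
      = fun t => a * extM F q (Function.update p k t) := by
    funext t; exact extM_smul a F q _
  rw [h, deriv_const_mul_field]

lemma pdQ_zero (q p : Fin 3 → ℝ) (k : Fin 3) :
    pdQ (extM (0 : Mspace → ℝ)) q p k = 0 := by
  unfold pdQ
  have h : (fun t => extM (0 : Mspace → ℝ) (Function.update q k t) p) = fun _ => (0:ℝ) := by
    funext t; exact extM_zero _ p
  rw [h, deriv_const]

lemma pdP_zero (q p : Fin 3 → ℝ) (k : Fin 3) :
    pdP (extM (0 : Mspace → ℝ)) q p k = 0 := by
  unfold pdP
  have h : (fun t => extM (0 : Mspace → ℝ) q (Function.update p k t)) = fun _ => (0:ℝ) := by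
    funext t; exact extM_zero q _
  rw [h, deriv_const]

lemma pbrM_add {F G : Mspace → ℝ} (hF : DiffM F) (hG : DiffM G) :
    pbrM sF (F + G) = pbrM sF F + pbrM sF G := by
  funext x
  obtain ⟨⟨q, hq⟩, p⟩ := x
  show pbr (extM sF) (extM (F + G)) q p = pbr (extM sF) (extM F) q p + pbr (extM sF) (extM G) q p
  unfold pbr
  rw [← Finset.sum_add_distrib]
  refine Finset.sum_congr rfl fun k _ => ?_
  rw [pdQ_add hF hG hq p k, pdP_add hF hG hq p k]
  ring

lemma pbrM_smul (a : ℝ) (F : Mspace → ℝ) :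
    pbrM sF (a • F) = a • pbrM sF F := by
  funext x
  obtain ⟨⟨q, hq⟩, p⟩ := x
  show pbr (extM sF) (extM (a • F)) q p = a * pbr (extM sF) (extM F) q p
  unfold pbr
  rw [Finset.mul_sum]
  refine Finset.sum_congr rfl fun k _ => ?_
  rw [pdQ_smul a F q p k, pdP_smul a F q p k]
  ring

lemma pbrM_zero : pbrM sF (0 : Mspace → ℝ) = 0 := by
  funext x
  obtain ⟨⟨q, hq⟩, p⟩ := x
  show pbr (extM sF) (extM (0 : Mspace → ℝ)) q p = 0
  unfold pbr
  refine Finset.sum_eq_zero fun k _ => ?_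
  rw [pdQ_zero q p k, pdP_zero q p k]
  ring

lemma final_alg (l m n : ℕ) (S c r : ℝ) (hr : r ≠ 0) :
    (2*(l:ℝ)*S^(l-1)*c^n / r^m) * S
      + (S^l*((n:ℝ)*c^(n-1)) / r^m - S^l*((n:ℝ)*c^(n-1))*r^m/(r^m)^2) * c
      + (S^l*c^n*((m:ℝ)*r^(m-1)/r)/(r^m)^2) * (r^2)
      = (2*(l:ℝ)+(m:ℝ)) * (S^l * c^n / r^m) := by
  have hrm : r ^ m ≠ 0 := pow_ne_zero _ hr
  rcases l with _ | l <;> rcases m with _ | m <;> rcases n with _ | n <;>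
    · push_cast
      simp only [Nat.add_sub_cancel, pow_succ, pow_zero, Nat.zero_sub, Nat.cast_zero]
      field_simp
      try ring

lemma key (l m n : ℕ) (x : Mspace) :
    pbrM sF (Wmon l m n) x = (2*(l:ℝ)+(m:ℝ)) * Wmon l m n x := by
  obtain ⟨⟨q, hq⟩, p⟩ := x
  have hr : nrm q ≠ 0 := ne_of_gt (nrm_pos hq)
  show pbr (extM sF) (extM (Wmon l m n)) q p
      = (2*(l:ℝ)+(m:ℝ)) * (normSq p ^ l * dotP p q ^ n / nrm q ^ m)
  unfold pbr
  have e1 : (∑ k : Fin 3, p k * p k) = normSq p := by simp [normSq, pow_two]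
  have e2 : (∑ k : Fin 3, p k * q k) = dotP p q := rfl
  have e3 : (∑ k : Fin 3, q k * q k) = nrm q ^ 2 := by rw [nrm_sq]; simp [normSq, pow_two]
  calc
    ∑ k, (pdQ (extM sF) q p k * pdP (extM (Wmon l m n)) q p k
        - pdP (extM sF) q p k * pdQ (extM (Wmon l m n)) q p k)
      = ∑ k : Fin 3,
        ((2*(l:ℝ)*normSq p^(l-1)*dotP p q^n / nrm q^m) * (p k * p k)
        + (normSq p^l*((n:ℝ)*dotP p q^(n-1)) / nrm q^m
            - normSq p^l*((n:ℝ)*dotP p q^(n-1))*nrm q^m/(nrm q^m)^2) * (p k * q k)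
        + (normSq p^l*dotP p q^n*((m:ℝ)*nrm q^(m-1)/nrm q)/(nrm q^m)^2) * (q k * q k)) := by
        refine Finset.sum_congr rfl fun k _ => ?_
        rw [pdQ_s hq p k, pdP_s hq p k, pdQ_W l m n hq p k, pdP_W l m n hq p k]
        ring
    _ = (2*(l:ℝ)*normSq p^(l-1)*dotP p q^n / nrm q^m) * normSq p
        + (normSq p^l*((n:ℝ)*dotP p q^(n-1)) / nrm q^m
            - normSq p^l*((n:ℝ)*dotP p q^(n-1))*nrm q^m/(nrm q^m)^2) * dotP p q
        + (normSq p^l*dotP p q^n*((m:ℝ)*nrm q^(m-1)/nrm q)/(nrm q^m)^2) * (nrm q^2) := by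
        simp only [Finset.sum_add_distrib, ← Finset.mul_sum]
        rw [e1, e2, e3]
    _ = (2*(l:ℝ)+(m:ℝ)) * (normSq p ^ l * dotP p q ^ n / nrm q ^ m) :=
        final_alg l m n (normSq p) (dotP p q) (nrm q) hr

end BracketAux

/-- for the function `s(q,p) = p·q` and every half-integer `j`, the Poisson
bracket of `s` with any `F ∈ W_j` again lies in `W_j`. -/
theorem bracket_with_pq_preserves_W (j : ℚ) (hj : ∃ z : ℤ, j = (z : ℚ) / 2)
    (F : Mspace → ℝ) (hF : F ∈ Wspace j) :
    pbrM (fun x => dotP x.2 x.1.1) F ∈ Wspace j := by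
  open BracketAux in
  have main : ∀ F : Mspace → ℝ, F ∈ Wspace j → DiffM F ∧ pbrM sF F ∈ Wspace j := by
    intro F hF
    refine Submodule.span_induction (p := fun G _ => DiffM G ∧ pbrM sF G ∈ Wspace j)
      ?_ ?_ ?_ ?_ hF
    · rintro f ⟨l, m, n, hc, rfl⟩
      refine ⟨diffM_Wmon l m n, ?_⟩
      have hkey : pbrM sF (Wmon l m n) = (2*(l:ℝ)+(m:ℝ)) • Wmon l m n := by
        funext x
        rw [key l m n x]
        simp [Pi.smul_apply, smul_eq_mul]
      rw [hkey]
      exact Submodule.smul_mem _ _ (Submodule.subset_span ⟨l, m, n, hc, rfl⟩)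
    · exact ⟨diffM_zero, by rw [pbrM_zero]; exact Submodule.zero_mem _⟩
    · rintro G H _ _ ⟨hGd, hGm⟩ ⟨hHd, hHm⟩
      exact ⟨diffM_add hGd hHd, by rw [pbrM_add hGd hHd]; exact Submodule.add_mem _ hGm hHm⟩
    · rintro a G _ ⟨hGd, hGm⟩
      exact ⟨diffM_smul a hGd, by rw [pbrM_smul a G]; exact Submodule.smul_mem _ _ hGm⟩
  exact (main F hF).2

end
end
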